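/- Let Z₁ and Z₂ be independent random variables, each uniform on [-1/2, 1/2]. Then the product Z₁Z₂ is sub-Gaussian with variance proxy 1/2⁷, i.e., E[exp(s·Z₁Z₂)] ≤ exp(s²/2⁸) for all real s. -/

import Mathlib

/-!
Expanding the exponential, `E[exp (s Z₁ Z₂)] = ∑ₙ sⁿ mₙ² / n!` with `mₙ = E[Z₁ⁿ]`, by
independence. The odd moments vanish and `m₂ₖ = 1 / (4ᵏ (2k + 1))`, so the even terms are
`(s² / 16)ᵏ / ((2k)! (2k + 1)²)`; the inequality `k! 16ᵏ ≤ (2k)! (2k + 1)²` bounds them termwise by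
those of the series of `exp (s² / 2⁸)`.
-/

open MeasureTheory ProbabilityTheory Real

/-- The uniform probability measure on the interval `[-1/2, 1/2]`. -/
noncomputable def unifHalf : Measure ℝ := volume.restrict (Set.Icc (-(1/2) : ℝ) (1/2))

theorem Real.hasSum_pow_div_factorial (x : ℝ) : HasSum (fun n ↦ x ^ n / n.factorial) (exp x) := by
  rw [Real.exp_eq_exp_ℝ]
  exact NormedSpace.expSeries_div_hasSum_exp x

theorem hasSum_integral_pow_div_factorial {α : Type*} [MeasurableSpace α] {μ : Measure α}
    [IsFiniteMeasure μ] {g : α → ℝ} {C : ℝ} (hg : AEStronglyMeasurable g μ)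
    (hC : ∀ᵐ x ∂μ, |g x| ≤ C) :
    HasSum (fun n : ℕ ↦ (∫ x, g x ^ n ∂μ) / n.factorial) (∫ x, exp (g x) ∂μ) := by
  have hbound (n : ℕ) : ∀ᵐ x ∂μ, ‖g x ^ n / n.factorial‖ ≤ C ^ n / n.factorial := by
    filter_upwards [hC] with x hx
    rw [norm_div, norm_pow, Real.norm_eq_abs, RCLike.norm_natCast]
    gcongr
  have hint (n : ℕ) : Integrable (fun x ↦ g x ^ n / n.factorial) μ :=
    .of_bound (by fun_prop) _ (hbound n)
  have hsum : Summable fun n : ℕ ↦ ∫ x, ‖g x ^ n / n.factorial‖ ∂μ := by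
    refine .of_nonneg_of_le (fun n ↦ integral_nonneg fun _ ↦ norm_nonneg _) (fun n ↦ ?_)
      ((Real.summable_pow_div_factorial C).mul_left (μ.real Set.univ))
    calc ∫ x, ‖g x ^ n / n.factorial‖ ∂μ ≤ ∫ _, C ^ n / n.factorial ∂μ :=
          integral_mono_ae (hint n).norm (integrable_const _) (hbound n)
      _ = μ.real Set.univ * (C ^ n / n.factorial) := by rw [integral_const, smul_eq_mul]
  simpa only [integral_div, (Real.hasSum_pow_div_factorial _).tsum_eq] using
    hasSum_integral_of_summable_integral_norm hint hsum

instance : IsProbabilityMeasure unifHalf := by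
  constructor
  rw [unifHalf, Measure.restrict_apply_univ, Real.volume_Icc]
  norm_num

theorem integral_pow_unifHalf (n : ℕ) :
    ∫ x, x ^ n ∂unifHalf = ((1 / 2) ^ (n + 1) - (-(1 / 2)) ^ (n + 1)) / (n + 1) := by
  rw [unifHalf, integral_Icc_eq_integral_Ioc, ← intervalIntegral.integral_of_le (by norm_num),
    integral_pow]

theorem integral_pow_unifHalf_odd (k : ℕ) : ∫ x, x ^ (2 * k + 1) ∂unifHalf = 0 := by
  rw [integral_pow_unifHalf, Even.neg_pow ⟨k + 1, by ring⟩, sub_self, zero_div]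

theorem integral_pow_unifHalf_even (k : ℕ) :
    ∫ x, x ^ (2 * k) ∂unifHalf = 1 / (4 ^ k * (2 * k + 1)) := by
  rw [integral_pow_unifHalf, Odd.neg_pow ⟨k, rfl⟩, pow_succ, pow_mul]
  push_cast
  field_simp
  rw [mul_right_comm, ← mul_pow]
  norm_num

theorem unifHalf_prod_eq :
    unifHalf.prod unifHalf =
      volume.restrict (Set.Icc (-(1/2) : ℝ) (1/2) ×ˢ Set.Icc (-(1/2)) (1/2)) := by
  rw [unifHalf, Measure.prod_restrict, Measure.volume_eq_prod]

theorem ae_abs_mul_le_unifHalf_prod :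
    ∀ᵐ p ∂unifHalf.prod unifHalf, |p.1 * p.2| ≤ 1 / 4 := by
  rw [unifHalf_prod_eq]
  filter_upwards [ae_restrict_mem (measurableSet_Icc.prod measurableSet_Icc)] with p hp
  obtain ⟨hx, hy⟩ := hp
  rw [abs_mul]
  calc |p.1| * |p.2| ≤ 1 / 2 * (1 / 2) := by
        gcongr
        exacts [abs_le.mpr hx, abs_le.mpr hy]
    _ = 1 / 4 := by norm_num

theorem factorial_mul_sixteen_pow_le (k : ℕ) :
    k.factorial * 16 ^ k ≤ (2 * k).factorial * (2 * k + 1) ^ 2 := by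
  induction k with
  | zero => norm_num
  | succ k ih =>
    rw [show 2 * (k + 1) = 2 * k + 1 + 1 by ring, Nat.factorial_succ, Nat.factorial_succ,
      Nat.factorial_succ]
    have step : (k + 1) * 16 * (2 * k + 1) ^ 2 ≤ (2 * k + 2) * (2 * k + 1) * (2 * k + 3) ^ 2 := by
      nlinarith [sq_nonneg (2 * (k : ℤ) - 1)]
    calc (k + 1) * k.factorial * 16 ^ (k + 1)
        = (k + 1) * 16 * (k.factorial * 16 ^ k) := by ring
      _ ≤ (k + 1) * 16 * ((2 * k).factorial * (2 * k + 1) ^ 2) := by gcongr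
      _ = (k + 1) * 16 * (2 * k + 1) ^ 2 * (2 * k).factorial := by ring
      _ ≤ (2 * k + 2) * (2 * k + 1) * (2 * k + 3) ^ 2 * (2 * k).factorial := by gcongr
      _ = _ := by ring

theorem hasSum_integral_exp_mul_unifHalf_prod (s : ℝ) :
    HasSum (fun n : ℕ ↦ s ^ n / n.factorial * (∫ x, x ^ n ∂unifHalf) ^ 2)
      (∫ p, exp (s * (p.1 * p.2)) ∂unifHalf.prod unifHalf) := by
  have hbound : ∀ᵐ p ∂unifHalf.prod unifHalf, |s * (p.1 * p.2)| ≤ |s| / 4 := by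
    filter_upwards [ae_abs_mul_le_unifHalf_prod] with p hp
    rw [abs_mul]
    linarith [mul_le_mul_of_nonneg_left hp (abs_nonneg s)]
  convert hasSum_integral_pow_div_factorial (by fun_prop) hbound using 2 with n
  simp_rw [mul_pow, integral_const_mul, integral_prod_mul (fun x : ℝ ↦ x ^ n) (fun y ↦ y ^ n)]
  ring

theorem even_series_term_le (s : ℝ) (k : ℕ) :
    s ^ (2 * k) / (2 * k).factorial * (1 / (4 ^ k * (2 * k + 1))) ^ 2
      ≤ (s ^ 2 / 2 ^ 8) ^ k / k.factorial := by
  have hfac : (k.factorial * 16 ^ k : ℝ) ≤ (2 * k).factorial * (2 * k + 1) ^ 2 := by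
    exact_mod_cast factorial_mul_sixteen_pow_le k
  calc s ^ (2 * k) / (2 * k).factorial * (1 / (4 ^ k * (2 * k + 1))) ^ 2
      = (s ^ 2) ^ k / (16 ^ k * ((2 * k).factorial * (2 * k + 1) ^ 2)) := by
        rw [pow_mul, show (16 : ℝ) ^ k = (4 ^ k) ^ 2 by rw [← pow_mul, mul_comm, pow_mul]; norm_num]
        field_simp
    _ ≤ (s ^ 2) ^ k / (16 ^ k * (k.factorial * 16 ^ k)) := by gcongr
    _ = (s ^ 2 / 2 ^ 8) ^ k / k.factorial := by
        rw [div_pow, div_div, show ((2 : ℝ) ^ 8) ^ k = 16 ^ k * 16 ^ k by rw [← mul_pow]; norm_num]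
        ring

theorem integral_exp_mul_unifHalf_prod_le (s : ℝ) :
    ∫ p, exp (s * (p.1 * p.2)) ∂unifHalf.prod unifHalf ≤ exp (s ^ 2 / 2 ^ 8) := by
  have hodd (k : ℕ) : s ^ (2 * k + 1) / (2 * k + 1).factorial
      * (∫ x, x ^ (2 * k + 1) ∂unifHalf) ^ 2 = 0 := by
    rw [integral_pow_unifHalf_odd]; ring
  have heven := (Function.Injective.hasSum_iff (mul_right_injective₀ two_ne_zero) ?_).mpr
    (hasSum_integral_exp_mul_unifHalf_prod s)
  · refine hasSum_le (fun k ↦ ?_) heven (Real.hasSum_pow_div_factorial _)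
    simpa only [Function.comp_apply, integral_pow_unifHalf_even] using even_series_term_le s k
  · intro n hn
    obtain ⟨k, rfl | rfl⟩ := Nat.even_or_odd' n
    · exact absurd ⟨k, rfl⟩ hn
    · exact hodd k

theorem integral_comp_eq_integral_prod_map_of_indepFun {Ω α β : Type*} [MeasurableSpace Ω]
    [MeasurableSpace α] [MeasurableSpace β] {P : Measure Ω} [IsFiniteMeasure P]
    {X : Ω → α} {Y : Ω → β}
    (hX : AEMeasurable X P) (hY : AEMeasurable Y P) (hXY : IndepFun X Y P) {F : α × β → ℝ}
    (hF : AEStronglyMeasurable F ((P.map X).prod (P.map Y))) :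
    ∫ ω, F (X ω, Y ω) ∂P = ∫ p, F p ∂(P.map X).prod (P.map Y) := by
  rw [← hXY.map_prod_eq_prod_map_map hX hY] at hF ⊢
  exact (integral_map (hX.prodMk hY) hF).symm

theorem uniform_product_subGaussian {Ω : Type*} [MeasurableSpace Ω] (P : Measure Ω)
    [IsProbabilityMeasure P] (Z₁ Z₂ : Ω → ℝ)
    (hZ₁ : Measure.map Z₁ P = unifHalf) (hZ₂ : Measure.map Z₂ P = unifHalf)
    (hindep : IndepFun Z₁ Z₂ P) :
    ∀ s : ℝ, ∫ ω, Real.exp (s * (Z₁ ω * Z₂ ω)) ∂P ≤ Real.exp (s ^ 2 / 2 ^ 8) := by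
  intro s
  have hZ₁m : AEMeasurable Z₁ P := .of_map_ne_zero (by simp [hZ₁, NeZero.ne])
  have hZ₂m : AEMeasurable Z₂ P := .of_map_ne_zero (by simp [hZ₂, NeZero.ne])
  have hlaw := integral_comp_eq_integral_prod_map_of_indepFun hZ₁m hZ₂m hindep
    (F := fun p ↦ exp (s * (p.1 * p.2))) (by fun_prop)
  rw [hZ₁, hZ₂] at hlaw
  exact hlaw ▸ integral_exp_mul_unifHalf_prod_le s
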